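/- Let Φ be a convex growth function. For every z = x+iy ∈ ℂ₊, the function f_z(w) = Φ⁻¹(1/y) · y²/(w−z̄)² is holomorphic on ℂ₊ and satisfies sup_{v>0} ∫_ℝ Φ(|f_z(u+iv)|) du ≤ π; in particular f_z ∈ H^Φ(ℂ₊) with ‖f_z‖_{H^Φ}^{lux} ≤ π. -/

import Mathlib

open MeasureTheory Complex Set
open scoped ENNReal Real

noncomputable section

/-- The upper half-plane `ℂ₊`. -/
def UHP : Set ℂ := {z : ℂ | 0 < z.im}

/-- A growth function: a continuous nondecreasing surjection from `[0, ∞)` onto itself. -/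
def IsGrowth (Φ : ℝ → ℝ) : Prop :=
  ContinuousOn Φ (Ici 0) ∧ MonotoneOn Φ (Ici 0) ∧
    MapsTo Φ (Ici 0) (Ici 0) ∧ SurjOn Φ (Ici 0) (Ici 0)

/-- Generalized inverse `Φ⁻¹(s) = inf {t ≥ 0 : Φ t ≥ s}`. -/
def invF (Φ : ℝ → ℝ) (s : ℝ) : ℝ := sInf {t : ℝ | 0 ≤ t ∧ s ≤ Φ t}

/-- `Φ` is of upper type `q`. -/
def UpperType (Φ : ℝ → ℝ) (q : ℝ) : Prop :=
  ∃ C > (0 : ℝ), ∀ s > (0 : ℝ), ∀ t ≥ (1 : ℝ), Φ (s * t) ≤ C * t ^ q * Φ s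

/-- The class `𝒰`: growth functions of some upper type `q ≥ 1` with `t ↦ Φ t / t`
nondecreasing. -/
def ClassU (Φ : ℝ → ℝ) : Prop :=
  IsGrowth Φ ∧ ∃ q ≥ (1 : ℝ), UpperType Φ q ∧ MonotoneOn (fun t => Φ t / t) (Ioi 0)

/-- The class `𝒰̃`: members of `𝒰` of upper type `q` satisfying conditions (a1), (a2), (a3). -/
def ClassUt (Φ : ℝ → ℝ) : Prop :=
  IsGrowth Φ ∧ ∃ q ≥ (1 : ℝ), UpperType Φ q ∧ MonotoneOn (fun t => Φ t / t) (Ioi 0) ∧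
    (∃ C₁ > (0 : ℝ), ∀ s > (0 : ℝ), ∀ t > (0 : ℝ), Φ (s * t) ≤ C₁ * Φ s * Φ t) ∧
    (∃ C₂ > (0 : ℝ), ∀ a ≥ (1 : ℝ), ∀ b ≥ (1 : ℝ), Φ (a / b) ≤ C₂ * Φ a / b ^ q) ∧
    (∃ C₃ > (0 : ℝ), ∀ a b : ℝ, 0 < a → a ≤ b → b ≤ 1 → Φ (a / b) ≤ C₃ * Φ a / Φ b)

/-- The `Δ₂`-condition. -/
def Delta2 (Φ : ℝ → ℝ) : Prop := ∃ K > (1 : ℝ), ∀ t ≥ (0 : ℝ), Φ (2 * t) ≤ K * Φ t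

/-- The complementary function `Ψ(s) = sup_{t ≥ 0} (st - Φ t)`, valued in `ℝ≥0∞`. -/
def complementaryFn (Φ : ℝ → ℝ) (s : ℝ) : ℝ≥0∞ :=
  ⨆ (t : ℝ) (_ : 0 ≤ t), ENNReal.ofReal (s * t - Φ t)

/-- The `∇₂`-condition: both `Φ` and its complementary function satisfy `Δ₂`. -/
def Nabla2 (Φ : ℝ → ℝ) : Prop :=
  Delta2 Φ ∧ ∃ K > (1 : ℝ), ∀ s ≥ (0 : ℝ),
    complementaryFn Φ (2 * s) ≤ ENNReal.ofReal K * complementaryFn Φ s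

/-- The Carleson square over the interval `(a, b)`. -/
def carlesonSq (a b : ℝ) : Set ℂ := {z : ℂ | z.re ∈ Ioo a b ∧ z.im ∈ Ioo 0 (b - a)}

/-- The Luxembourg (quasi)-norm of `g` in `L^Φ(μ)`. -/
def luxNorm {X : Type*} [MeasurableSpace X] (Φ : ℝ → ℝ) (μ : Measure X) (g : X → ℂ) : ℝ≥0∞ :=
  ⨅ (l : ℝ) (_ : 0 < l ∧ ∫⁻ x, ENNReal.ofReal (Φ (‖g x‖ / l)) ∂μ ≤ 1),
    ENNReal.ofReal l

/-- The Hardy–Orlicz (Luxembourg) norm `sup_{y > 0} ‖f(· + iy)‖_{L^Φ}^{lux}`. -/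
def hardyNorm (Φ : ℝ → ℝ) (f : ℂ → ℂ) : ℝ≥0∞ :=
  ⨆ (y : ℝ) (_ : 0 < y),
    luxNorm Φ (volume : Measure ℝ) (fun x => f ((x : ℂ) + (y : ℂ) * Complex.I))

/-- Membership in the Hardy–Orlicz space `H^Φ(ℂ₊)`. -/
def MemHardy (Φ : ℝ → ℝ) (f : ℂ → ℂ) : Prop :=
  DifferentiableOn ℂ f UHP ∧ hardyNorm Φ f < ⊤

/-- The measure `dV_α = y^α dx dy` on the upper half-plane. -/
def bergMeasure (α : ℝ) : Measure ℂ :=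
  ((volume : Measure ℂ).restrict UHP).withDensity fun z => ENNReal.ofReal (z.im ^ α)

/-- The Luxembourg (quasi)-norm of the Bergman–Orlicz space `A_α^Φ(ℂ₊)`. -/
def bergLux (Φ : ℝ → ℝ) (α : ℝ) (f : ℂ → ℂ) : ℝ≥0∞ := luxNorm Φ (bergMeasure α) f

/-- Membership in the Bergman–Orlicz space `A_α^Φ(ℂ₊)`. -/
def MemBergman (Φ : ℝ → ℝ) (α : ℝ) (f : ℂ → ℂ) : Prop :=
  DifferentiableOn ℂ f UHP ∧
    ∫⁻ z, ENNReal.ofReal (Φ (‖f z‖)) ∂(bergMeasure α) < ⊤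

/-- `g` is a pointwise multiplier from `H^{Φ₁}(ℂ₊)` to `A_α^{Φ₂}(ℂ₊)`. -/
def MultHB (Φ₁ Φ₂ : ℝ → ℝ) (α : ℝ) (g : ℂ → ℂ) : Prop :=
  DifferentiableOn ℂ g UHP ∧
    ∃ C > (0 : ℝ), ∀ f : ℂ → ℂ, MemHardy Φ₁ f →
      bergLux Φ₂ α (fun z => f z * g z) ≤ ENNReal.ofReal C * hardyNorm Φ₁ f

/-- `g` is a pointwise multiplier from `A_α^{Φ₁}(ℂ₊)` to `A_β^{Φ₂}(ℂ₊)`. -/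
def MultBB (Φ₁ Φ₂ : ℝ → ℝ) (α β : ℝ) (g : ℂ → ℂ) : Prop :=
  DifferentiableOn ℂ g UHP ∧
    ∃ C > (0 : ℝ), ∀ f : ℂ → ℂ, MemBergman Φ₁ α f →
      bergLux Φ₂ β (fun z => f z * g z) ≤ ENNReal.ofReal C * bergLux Φ₁ α f

/-- Extension of a growth function to `ℝ≥0∞`. -/
def PhiE (Φ : ℝ → ℝ) (x : ℝ≥0∞) : ℝ≥0∞ :=
  if x = ⊤ then ⊤ else ENNReal.ofReal (Φ x.toReal)

/-- The Hardy–Littlewood maximal function on `ℝ`. -/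
def maximalR (f : ℝ → ℂ) (x : ℝ) : ℝ≥0∞ :=
  ⨆ (a : ℝ) (b : ℝ) (_ : a ≤ x ∧ x ≤ b ∧ a < b),
    (∫⁻ s in Ioo a b, (‖f s‖₊ : ℝ≥0∞)) / ENNReal.ofReal (b - a)

/-- The nontangential maximal function `f*` of `f : ℂ₊ → ℂ`. -/
def ntMax (f : ℂ → ℂ) (x : ℝ) : ℝ≥0∞ :=
  ⨆ (z : ℂ) (_ : 0 < z.im ∧ |z.re - x| < z.im), (‖f z‖₊ : ℝ≥0∞)

/-- The Luxembourg norm of the nontangential maximal function `f*` in `L^Φ(ℝ)`. -/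
def ntLux (Φ : ℝ → ℝ) (f : ℂ → ℂ) : ℝ≥0∞ :=
  ⨅ (l : ℝ) (_ : 0 < l ∧ ∫⁻ x, PhiE Φ (ntMax f x / ENNReal.ofReal l) ≤ 1), ENNReal.ofReal l

/-- The weighted Hardy–Littlewood maximal function `𝓜_α` on `ℂ₊`. -/
def maximalBerg (α : ℝ) (f : ℂ → ℂ) (z : ℂ) : ℝ≥0∞ :=
  ⨆ (a : ℝ) (b : ℝ) (_ : a < b ∧ z ∈ carlesonSq a b),
    (∫⁻ w in carlesonSq a b, (‖f w‖₊ : ℝ≥0∞) ∂(bergMeasure α)) /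
      bergMeasure α (carlesonSq a b)

/-- The function `Φ₃(t) = 1 / (Φ₂ ∘ Φ₁⁻¹)(1/t)` for `t > 0`, `Φ₃(0) = 0`. -/
def Phi3 (Φ₁ Φ₂ : ℝ → ℝ) (t : ℝ) : ℝ :=
  if t ≤ 0 then 0 else 1 / Φ₂ (invF Φ₁ (1 / t))

/-- The Beta function `B(m, n) = ∫₀^∞ u^{m-1}/(1+u)^{m+n} du`. -/
def betaFn (m n : ℝ) : ℝ := ∫ u in Ioi (0 : ℝ), u ^ (m - 1) / (1 + u) ^ (m + n)

-- helper lemmas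
lemma aux_key (a : ℝ) (ha : a ≠ 0) :
    ∀ u : ℝ, (u ^ 2 + a ^ 2)⁻¹ = a⁻¹ ^ 2 * (1 + (a⁻¹ * u) ^ 2)⁻¹ := by
  intro u
  have : a ^ 2 ≠ 0 := pow_ne_zero _ ha
  field_simp
  ring

lemma aux_integrable (a : ℝ) (ha : a ≠ 0) : Integrable fun u : ℝ => (u ^ 2 + a ^ 2)⁻¹ := by
  simp_rw [aux_key a ha]
  exact Integrable.const_mul (integrable_inv_one_add_sq.comp_mul_left' (inv_ne_zero ha)) _

lemma aux_integral (a : ℝ) (ha : 0 < a) : (∫ u : ℝ, (u ^ 2 + a ^ 2)⁻¹) = π / a := by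
  simp_rw [aux_key a ha.ne']
  rw [integral_const_mul, MeasureTheory.Measure.integral_comp_mul_left (fun t => (1 + t ^ 2)⁻¹) a⁻¹,
    integral_univ_inv_one_add_sq, inv_inv, abs_of_pos ha, smul_eq_mul]
  field_simp

lemma growth_zero {Φ : ℝ → ℝ} (hg : IsGrowth Φ) : Φ 0 = 0 := by
  obtain ⟨-, hmono, hmaps, hsurj⟩ := hg
  have h0 : 0 ≤ Φ 0 := hmaps self_mem_Ici
  by_contra h
  have hpos : 0 < Φ 0 := lt_of_le_of_ne h0 (Ne.symm h)
  obtain ⟨t, ht, hts⟩ := hsurj (show Φ 0 / 2 ∈ Ici 0 from mem_Ici.mpr (by linarith))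
  have : Φ 0 ≤ Φ t := hmono self_mem_Ici ht ht
  rw [hts] at this
  linarith

lemma invF_nonneg (Φ : ℝ → ℝ) (s : ℝ) : 0 ≤ invF Φ s := by
  by_cases hne : {t : ℝ | 0 ≤ t ∧ s ≤ Φ t}.Nonempty
  · exact le_csInf hne fun t ht => ht.1
  · simp [invF, Set.not_nonempty_iff_eq_empty.mp hne, Real.sInf_empty]

lemma phi_invF_le {Φ : ℝ → ℝ} (hg : IsGrowth Φ) {s : ℝ} (hs : 0 ≤ s) :
    Φ (invF Φ s) ≤ s := by
  obtain ⟨-, hmono, hmaps, hsurj⟩ := hg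
  obtain ⟨t₀, ht₀, hts⟩ := hsurj hs
  have hmem : t₀ ∈ {t : ℝ | 0 ≤ t ∧ s ≤ Φ t} := ⟨ht₀, hts.ge⟩
  have hle : invF Φ s ≤ t₀ := csInf_le ⟨0, fun t ht => ht.1⟩ hmem
  calc Φ (invF Φ s) ≤ Φ t₀ := hmono (invF_nonneg Φ s) ht₀ hle
    _ = s := hts

lemma convex_mul_le {Φ : ℝ → ℝ} (hg : IsGrowth Φ) (hc : ConvexOn ℝ (Ici 0) Φ)
    {r t : ℝ} (hr0 : 0 ≤ r) (hr1 : r ≤ 1) (ht : 0 ≤ t) : Φ (r * t) ≤ r * Φ t := by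
  have := hc.2 (mem_Ici.mpr ht) self_mem_Ici hr0 (by linarith : (0:ℝ) ≤ 1 - r) (by ring)
  simp only [smul_eq_mul, mul_zero, add_zero] at this
  calc Φ (r * t) ≤ r * Φ t + (1 - r) * Φ 0 := this
    _ = r * Φ t := by rw [growth_zero hg]; ring


/-- The test function `f_z(w) = Φ⁻¹(1/y) y² / (w - z̄)²` lies in `H^Φ(ℂ₊)` with
`‖f_z‖ ≤ π`. -/
theorem hardy_test_function
    (Φ : ℝ → ℝ) (hg : IsGrowth Φ) (hc : ConvexOn ℝ (Ici 0) Φ)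
    (z : ℂ) (hz : z ∈ UHP) :
    DifferentiableOn ℂ
        (fun w => (((invF Φ (1 / z.im) * z.im ^ 2 : ℝ) : ℂ)) / (w - (starRingEnd ℂ) z) ^ 2)
        UHP ∧
      (∀ v > (0 : ℝ),
        ∫⁻ u : ℝ, ENNReal.ofReal
            (Φ ‖(((invF Φ (1 / z.im) * z.im ^ 2 : ℝ) : ℂ)) /
              (((u : ℂ) + (v : ℂ) * Complex.I) - (starRingEnd ℂ) z) ^ 2‖)
          ≤ ENNReal.ofReal π) ∧
      hardyNorm Φ
          (fun w => (((invF Φ (1 / z.im) * z.im ^ 2 : ℝ) : ℂ)) / (w - (starRingEnd ℂ) z) ^ 2)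
        ≤ ENNReal.ofReal π := by
  set y := z.im with hy_def
  have hy : 0 < y := hz
  set c' : ℝ := invF Φ (1 / y) with hc'_def
  have hc'0 : 0 ≤ c' := invF_nonneg Φ _
  have hΦc' : Φ c' ≤ 1 / y := phi_invF_le hg (by positivity)
  -- nonvanishing of denominator
  have hne : ∀ w : ℂ, w ∈ UHP → w - (starRingEnd ℂ) z ≠ 0 := by
    intro w hw h
    have : (w - (starRingEnd ℂ) z).im = w.im + y := by simp [hy_def]
    rw [h] at this
    have hw' : 0 < w.im := hw
    simp at this
    linarith
  have hdiff : DifferentiableOn ℂ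
      (fun w => (((c' * y ^ 2 : ℝ) : ℂ)) / (w - (starRingEnd ℂ) z) ^ 2) UHP := by
    apply DifferentiableOn.div (differentiableOn_const _)
    · exact ((differentiable_id.sub_const _).pow 2).differentiableOn
    · intro w hw
      exact pow_ne_zero 2 (hne w hw)
  -- the key integral bound
  have key : ∀ v > (0 : ℝ),
      ∫⁻ u : ℝ, ENNReal.ofReal
          (Φ ‖(((c' * y ^ 2 : ℝ) : ℂ)) /
            (((u : ℂ) + (v : ℂ) * Complex.I) - (starRingEnd ℂ) z) ^ 2‖)
        ≤ ENNReal.ofReal π := by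
    intro v hv
    set b : ℝ := v + y with hb_def
    have hb : 0 < b := by positivity
    set A : ℝ → ℝ := fun u => (u - z.re) ^ 2 + b ^ 2 with hA_def
    have hApos : ∀ u, 0 < A u := fun u => by positivity
    have habs : ∀ u : ℝ, ‖(((c' * y ^ 2 : ℝ) : ℂ)) /
        (((u : ℂ) + (v : ℂ) * Complex.I) - (starRingEnd ℂ) z) ^ 2‖ = c' * y ^ 2 / A u := by
      intro u
      rw [norm_div, norm_pow, Complex.norm_real, Real.norm_eq_abs,
        _root_.abs_of_nonneg (by positivity : (0:ℝ) ≤ c' * y ^ 2)]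
      congr 1
      rw [← Complex.normSq_eq_norm_sq, Complex.normSq_apply]
      have h1 : (((u : ℂ) + (v : ℂ) * Complex.I) - (starRingEnd ℂ) z).re = u - z.re := by simp
      have h2 : (((u : ℂ) + (v : ℂ) * Complex.I) - (starRingEnd ℂ) z).im = v + y := by simp [hy_def]
      rw [h1, h2]
      simp [hA_def, hb_def]
      ring
    -- pointwise bound
    have hpt : ∀ u : ℝ, Φ (c' * y ^ 2 / A u) ≤ y / A u := by
      intro u
      have hr0 : 0 ≤ y ^ 2 / A u := by positivity
      have hr1 : y ^ 2 / A u ≤ 1 := by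
        rw [div_le_one (hApos u)]
        show y ^ 2 ≤ (u - z.re) ^ 2 + b ^ 2
        nlinarith [sq_nonneg (u - z.re)]
      have heq : c' * y ^ 2 / A u = (y ^ 2 / A u) * c' := by ring
      rw [heq]
      calc Φ ((y ^ 2 / A u) * c') ≤ (y ^ 2 / A u) * Φ c' :=
            convex_mul_le hg hc hr0 hr1 hc'0
        _ ≤ (y ^ 2 / A u) * (1 / y) := by
            exact mul_le_mul_of_nonneg_left hΦc' hr0
        _ = y / A u := by field_simp
    calc ∫⁻ u : ℝ, ENNReal.ofReal
          (Φ ‖(((c' * y ^ 2 : ℝ) : ℂ)) /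
            (((u : ℂ) + (v : ℂ) * Complex.I) - (starRingEnd ℂ) z) ^ 2‖)
        ≤ ∫⁻ u : ℝ, ENNReal.ofReal (y / A u) := by
          apply lintegral_mono
          intro u
          apply ENNReal.ofReal_le_ofReal
          rw [habs u]
          exact hpt u
      _ = ENNReal.ofReal (∫ u : ℝ, y / A u) := by
          rw [← ofReal_integral_eq_lintegral_ofReal]
          · have : Integrable (fun u : ℝ => y * ((u - z.re) ^ 2 + b ^ 2)⁻¹) :=
              ((aux_integrable b hb.ne').comp_sub_right z.re).const_mul y
            simpa [div_eq_mul_inv, hA_def] using this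
          · filter_upwards with u
            exact div_nonneg hy.le (hApos u).le
      _ ≤ ENNReal.ofReal π := by
          apply ENNReal.ofReal_le_ofReal
          have h1 : (∫ u : ℝ, y / A u) = y * (π / b) := by
            simp only [hA_def, div_eq_mul_inv]
            rw [integral_const_mul]
            congr 1
            rw [show (∫ u : ℝ, ((u - z.re) ^ 2 + b ^ 2)⁻¹)
                = ∫ u : ℝ, (u ^ 2 + b ^ 2)⁻¹ from
              integral_sub_right_eq_self (fun u => (u ^ 2 + b ^ 2)⁻¹) z.re]
            exact aux_integral b hb
          rw [h1]
          rw [mul_div_assoc'] 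
          rw [div_le_iff₀ hb]
          nlinarith [Real.pi_pos]
  refine ⟨hdiff, key, ?_⟩
  -- hardyNorm bound
  apply iSup₂_le
  intro v hv
  refine iInf₂_le π ⟨Real.pi_pos, ?_⟩
  have hπ1 : (1:ℝ) ≤ π := by nlinarith [Real.pi_gt_three]
  calc ∫⁻ x : ℝ, ENNReal.ofReal
        (Φ (‖(((c' * y ^ 2 : ℝ) : ℂ)) /
          (((x : ℂ) + (v : ℂ) * Complex.I) - (starRingEnd ℂ) z) ^ 2‖ / π))
      ≤ ∫⁻ x : ℝ, ENNReal.ofReal π⁻¹ * ENNReal.ofReal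
        (Φ ‖(((c' * y ^ 2 : ℝ) : ℂ)) /
          (((x : ℂ) + (v : ℂ) * Complex.I) - (starRingEnd ℂ) z) ^ 2‖) := by
        apply lintegral_mono
        intro x
        dsimp only
        rw [← ENNReal.ofReal_mul (by positivity)]
        apply ENNReal.ofReal_le_ofReal
        rw [div_eq_inv_mul]
        exact convex_mul_le hg hc (by positivity) (inv_le_one_of_one_le₀ hπ1)
          (norm_nonneg _)
    _ = ENNReal.ofReal π⁻¹ * ∫⁻ x : ℝ, ENNReal.ofReal
        (Φ ‖(((c' * y ^ 2 : ℝ) : ℂ)) /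
          (((x : ℂ) + (v : ℂ) * Complex.I) - (starRingEnd ℂ) z) ^ 2‖) :=
        lintegral_const_mul' _ _ ENNReal.ofReal_ne_top
    _ ≤ ENNReal.ofReal π⁻¹ * ENNReal.ofReal π := by
        exact mul_le_mul_right (key v hv) _
    _ = 1 := by
        rw [← ENNReal.ofReal_mul (by positivity), inv_mul_cancel₀ Real.pi_ne_zero,
          ENNReal.ofReal_one]
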